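/- Let G be a graph, let v, v1, v2 form a triangle in G with deg(v1) = deg(v2) = 3, where v1 has a third neighbor v1' of degree at most 4 and v2 has a third neighbor v2' of degree at most 4, and deg(v) = 5. If G − {v1, v2} has an (F2, F)-partition and v, v1', v2' each have degree at most 3 in G − {v1, v2}, and moreover every 3⁻-vertex in the partition can be assumed to lie in V2 or to lie in V1 non-saturated, then G has an (F2, F)-partition. -/

import Mathlib

/-! Attaching a vertex with at most one neighbour to a forest gives a forest, and on the `V1`
side the maximum-degree bound survives as long as that neighbour was not `V1`-saturated. Since
`N(v₁) = {v, v₂, v₁'}` and `N(v₂) = {v, v₁, v₂'}`, whatever the sides of `v`, `v₁'`, `v₂'`, the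
vertices `v₁` and `v₂` can be added one after the other as such pendant vertices, each to a side
holding at most one of its neighbours. -/

open SimpleGraph

/-- `G` contains no cycle of length `n`. -/
def NoCycleLen {V : Type} (G : SimpleGraph V) (n : ℕ) : Prop :=
  ∀ (v : V) (w : G.Walk v v), w.IsCycle → w.length ≠ n

/-- `(V1, V2)` partitions the vertex subset `s`, with `G[V1]` a forest of maximum
degree at most 2 and `G[V2]` a forest. -/
def IsF2FPartOn {V : Type} (G : SimpleGraph V) (s V1 V2 : Set V) : Prop :=
  V1 ∪ V2 = s ∧ Disjoint V1 V2 ∧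
  (G.induce V1).IsAcyclic ∧
  (∀ x : V1, ((G.induce V1).neighborSet x).ncard ≤ 2) ∧
  (G.induce V2).IsAcyclic

open Set

namespace SimpleGraph

variable {V : Type*} {G : SimpleGraph V}

lemma ncard_neighborSet_induce (S : Set V) (x : S) :
    ((G.induce S).neighborSet x).ncard = (G.neighborSet x ∩ S).ncard := by
  rw [← ncard_image_of_injective _ Subtype.val_injective]
  congr 1
  ext z
  simp only [mem_image, mem_neighborSet, induce_adj, mem_inter_iff]
  exact ⟨fun ⟨w, hw, hwz⟩ => hwz ▸ ⟨hw, w.2⟩, fun ⟨hz, hzS⟩ => ⟨⟨z, hzS⟩, hz, rfl⟩⟩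

lemma forall_ncard_neighborSet_induce_le_iff {S : Set V} {k : ℕ} :
    (∀ x : S, ((G.induce S).neighborSet x).ncard ≤ k) ↔
      ∀ x ∈ S, (G.neighborSet x ∩ S).ncard ≤ k := by
  simp only [ncard_neighborSet_induce, Subtype.forall]

lemma neighborSet_eq_of_degree_eq_three {a x y z : V} [Fintype (G.neighborSet a)]
    (hd : G.degree a = 3) (hx : G.Adj a x) (hy : G.Adj a y) (hz : G.Adj a z)
    (hxy : x ≠ y) (hxz : x ≠ z) (hyz : y ≠ z) : G.neighborSet a = {x, y, z} := by
  refine (eq_of_subset_of_ncard_le (by rintro w (rfl | rfl | rfl) <;> assumption) ?_).symm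
  rw [← coe_neighborFinset, ncard_coe_finset, card_neighborFinset_eq_degree, hd,
    ncard_eq_three.mpr ⟨x, y, z, hxy, hxz, hyz, rfl⟩]

/-- A cycle through `a` would use two distinct neighbours of `a`, both in `S`. -/
lemma isAcyclic_induce_insert {S : Set V} {a x : V} (h : (G.induce S).IsAcyclic)
    (hN : G.neighborSet a ∩ S ⊆ {x}) : (G.induce (insert a S)).IsAcyclic := by
  intro u c hc
  let c' := c.map (Embedding.induce (insert a S)).toHom
  have hc' : c'.IsCycle := hc.map Subtype.val_injective
  have hsupp : ∀ w ∈ c'.support, w ∈ insert a S := by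
    simp only [c', Walk.support_map, List.mem_map]
    rintro _ ⟨w, -, rfl⟩
    exact w.2
  by_cases ha : a ∈ c'.support
  · have hsub : c'.toSubgraph.neighborSet a ⊆ {x} := fun w hw => by
      have hadj := c'.toSubgraph.adj_sub hw
      have hw' : w ∈ c'.support := (c'.mem_verts_toSubgraph).1 hw.snd_mem
      exact hN ⟨hadj, (hsupp w hw').resolve_left hadj.ne'⟩
    have := ncard_le_ncard hsub
    rw [hc'.ncard_neighborSet_toSubgraph_eq_two ha, ncard_singleton] at this
    omega
  · have hS : ∀ w ∈ c'.support, w ∈ S := fun w hw =>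
      (hsupp w hw).resolve_left (ne_of_mem_of_not_mem hw ha)
    exact h (c'.induce S hS) (.of_map (f := (Embedding.induce S).toHom) (by
      rw [Walk.map_induce]; exact hc'))

end SimpleGraph

variable {V : Type} {G : SimpleGraph V}

namespace IsF2FPartOn

variable {s V1 V2 : Set V} {a x : V}

lemma notMem_left (h : IsF2FPartOn G s V1 V2) (ha : a ∉ s) : a ∉ V1 :=
  fun h' => ha (h.1 ▸ Or.inl h')

lemma notMem_right (h : IsF2FPartOn G s V1 V2) (ha : a ∉ s) : a ∉ V2 :=
  fun h' => ha (h.1 ▸ Or.inr h')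

lemma insert_right (h : IsF2FPartOn G s V1 V2) (ha : a ∉ s) (hN : G.neighborSet a ∩ V2 ⊆ {x}) :
    IsF2FPartOn G (insert a s) V1 (insert a V2) :=
  ⟨by rw [union_insert, h.1], disjoint_insert_right.2 ⟨h.notMem_left ha, h.2.1⟩, h.2.2.1,
    h.2.2.2.1, isAcyclic_induce_insert h.2.2.2.2 hN⟩

lemma insert_left [Finite V] (h : IsF2FPartOn G s V1 V2) (ha : a ∉ s)
    (hN : G.neighborSet a ∩ V1 ⊆ {x})
    (hx : x ∈ V1 → (G.neighborSet x ∩ V1).ncard ≤ 1) :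
    IsF2FPartOn G (insert a s) (insert a V1) V2 := by
  obtain ⟨hun, hdis, hac₁, hdeg₁, hac₂⟩ := h
  refine ⟨by rw [insert_union, hun], disjoint_insert_left.2 ⟨?_, hdis⟩,
    isAcyclic_induce_insert hac₁ hN, ?_, hac₂⟩
  · exact fun h' => ha (hun ▸ Or.inr h')
  rw [forall_ncard_neighborSet_induce_le_iff] at hdeg₁ ⊢
  rintro y (rfl | hy)
  · have hsub : G.neighborSet y ∩ insert y V1 ⊆ {x} := fun w ⟨hw, hw'⟩ =>
      hN ⟨hw, hw'.resolve_left hw.ne'⟩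
    exact (ncard_le_ncard hsub).trans (by simp)
  by_cases hyx : y = x
  · subst hyx
    calc (G.neighborSet y ∩ insert a V1).ncard
        ≤ (insert a (G.neighborSet y ∩ V1)).ncard := ncard_le_ncard fun w ⟨hw, hw'⟩ =>
          hw'.imp_right (⟨hw, ·⟩)
      _ ≤ (G.neighborSet y ∩ V1).ncard + 1 := ncard_insert_le _ _
      _ ≤ 2 := by have := hx hy; omega
  · have hya : a ∉ G.neighborSet y := fun hay => hyx (hN ⟨hay.symm, hy⟩)
    rw [inter_insert_of_notMem hya]
    exact hdeg₁ y hy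

end IsF2FPartOn

theorem exists_isF2FPartOn_univ_of_compl_pair [Finite V] {V1 V2 : Set V} {v v₁ v₂ v₁' v₂' : V}
    (h₁₂ : v₁ ≠ v₂) (hN₁ : G.neighborSet v₁ ⊆ {v, v₂, v₁'})
    (hN₂ : G.neighborSet v₂ ⊆ {v, v₁, v₂'}) (h : IsF2FPartOn G {v₁, v₂}ᶜ V1 V2)
    (hsat : ∀ u ∈ ({v, v₁', v₂'} : Set V), u ∈ V1 → (G.neighborSet u ∩ V1).ncard ≤ 1) :
    ∃ W1 W2, IsF2FPartOn G univ W1 W2 := by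
  have h₁ : v₁ ∉ ({v₁, v₂}ᶜ : Set V) := by simp
  have h₂ : v₂ ∉ ({v₁, v₂}ᶜ : Set V) := by simp
  have h₂₁ : v₂ ∉ insert v₁ ({v₁, v₂}ᶜ : Set V) := by simp [h₁₂.symm]
  have h₁₂' : v₁ ∉ insert v₂ ({v₁, v₂}ᶜ : Set V) := by simp [h₁₂]
  have huniv : insert v₂ (insert v₁ ({v₁, v₂}ᶜ : Set V)) = univ := by
    ext; simp only [mem_insert_iff, mem_compl_iff, mem_univ, iff_true]; tauto
  have huniv' : insert v₁ (insert v₂ ({v₁, v₂}ᶜ : Set V)) = univ := by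
    rw [insert_comm, huniv]
  have hV2 : ∀ {u}, u ∈ V1 → u ∉ V2 := fun hu hu' => disjoint_left.1 h.2.1 hu hu'
  have h₁V1 := h.notMem_left h₁
  have h₂V1 := h.notMem_left h₂
  have h₁V2 := h.notMem_right h₁
  have h₂V2 := h.notMem_right h₂
  by_cases hv : v ∈ V1
  · have hvV2 := hV2 hv
    by_cases h₂' : v₂' ∈ V1
    · have h₂'V2 := hV2 h₂'
      refine ⟨V1, insert v₂ (insert v₁ V2), huniv ▸
        ((h.insert_right h₁ (x := v₁') ?_).insert_right h₂₁ (x := v₁) ?_)⟩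
      · exact fun w ⟨hw, _⟩ => by obtain rfl | rfl | rfl := hN₁ hw <;> simp_all
      · exact fun w ⟨hw, _⟩ => by obtain rfl | rfl | rfl := hN₂ hw <;> simp_all
    · refine ⟨insert v₂ V1, insert v₁ V2, huniv ▸
        ((h.insert_right h₁ (x := v₁') ?_).insert_left h₂₁ (x := v) ?_ (hsat v (by simp)))⟩
      · exact fun w ⟨hw, _⟩ => by obtain rfl | rfl | rfl := hN₁ hw <;> simp_all
      · exact fun w ⟨hw, _⟩ => by obtain rfl | rfl | rfl := hN₂ hw <;> simp_all
  by_cases h₁' : v₁' ∈ V1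
  · refine ⟨insert v₂ V1, insert v₁ V2, huniv ▸
      ((h.insert_right h₁ (x := v) ?_).insert_left h₂₁ (x := v₂') ?_ (hsat v₂' (by simp)))⟩
    · exact fun w ⟨hw, _⟩ => by obtain rfl | rfl | rfl := hN₁ hw <;> simp_all
    · exact fun w ⟨hw, _⟩ => by obtain rfl | rfl | rfl := hN₂ hw <;> simp_all
  by_cases h₂' : v₂' ∈ V1
  · refine ⟨insert v₁ V1, insert v₂ V2, huniv' ▸
      ((h.insert_right h₂ (x := v) ?_).insert_left h₁₂' (x := v₁') ?_ (hsat v₁' (by simp)))⟩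
    · exact fun w ⟨hw, _⟩ => by obtain rfl | rfl | rfl := hN₂ hw <;> simp_all
    · exact fun w ⟨hw, _⟩ => by obtain rfl | rfl | rfl := hN₁ hw <;> simp_all
  -- `v₁v₂` becomes an isolated edge of `G[W1]`
  refine ⟨insert v₂ (insert v₁ V1), V2, huniv ▸
    ((h.insert_left h₁ (x := v) ?_ (absurd · hv)).insert_left h₂₁ (x := v₁) ?_ fun _ => ?_)⟩
  · exact fun w ⟨hw, _⟩ => by obtain rfl | rfl | rfl := hN₁ hw <;> simp_all
  · exact fun w ⟨hw, _⟩ => by obtain rfl | rfl | rfl := hN₂ hw <;> simp_all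
  · refine (ncard_le_ncard (t := {v}) ?_).trans (ncard_singleton v).le
    rintro w ⟨hw, _⟩
    obtain rfl | rfl | rfl := hN₁ hw <;> simp_all

theorem poor_triangle_partition_extension_general {V : Type} [Fintype V]
    (G : SimpleGraph V) [DecidableRel G.Adj]
    (v v₁ v₂ v₁' v₂' : V)
    (h1 : G.Adj v v₁) (h2 : G.Adj v v₂) (h3 : G.Adj v₁ v₂)
    (d1 : G.degree v₁ = 3) (d2 : G.degree v₂ = 3)
    (h1' : G.Adj v₁ v₁') (h2' : G.Adj v₂ v₂')
    (hv1' : v₁' ≠ v ∧ v₁' ≠ v₂) (hv2' : v₂' ≠ v ∧ v₂' ≠ v₁)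
    (hpart : ∃ V1 V2 : Set V, IsF2FPartOn G ({v₁, v₂}ᶜ : Set V) V1 V2 ∧
      ∀ u ∈ ({v, v₁', v₂'} : Set V), u ∈ V2 ∨
        (u ∈ V1 ∧ ((G.neighborSet u ∩ V1) \ {v₁, v₂}).ncard ≤ 1)) :
    ∃ W1 W2 : Set V, IsF2FPartOn G Set.univ W1 W2 := by
  obtain ⟨V1, V2, hpart, hplace⟩ := hpart
  have hN₁ := neighborSet_eq_of_degree_eq_three d1 h1.symm h3 h1' h2.ne hv1'.1.symm hv1'.2.symm
  have hN₂ := neighborSet_eq_of_degree_eq_three d2 h2.symm h3.symm h2' h1.ne hv2'.1.symm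
    hv2'.2.symm
  refine exists_isF2FPartOn_univ_of_compl_pair h3.ne hN₁.subset hN₂.subset hpart
    fun u hu huV1 => ?_
  obtain huV2 | ⟨-, hu⟩ := hplace u hu
  · exact absurd huV2 (disjoint_left.1 hpart.2.1 huV1)
  have hV1 : V1 ⊆ {v₁, v₂}ᶜ := hpart.1 ▸ subset_union_left
  rwa [(subset_compl_iff_disjoint_right.1 (inter_subset_right.trans hV1)).sdiff_eq_left] at hu

theorem poor_triangle_partition_extension {V : Type} [Fintype V] [DecidableEq V]
    (G : SimpleGraph V) [DecidableRel G.Adj]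
    (v v₁ v₂ v₁' v₂' : V)
    (h1 : G.Adj v v₁) (h2 : G.Adj v v₂) (h3 : G.Adj v₁ v₂)
    (d1 : G.degree v₁ = 3) (d2 : G.degree v₂ = 3) (dv : G.degree v = 5)
    (h1' : G.Adj v₁ v₁') (h2' : G.Adj v₂ v₂')
    (hv1' : v₁' ≠ v ∧ v₁' ≠ v₂) (hv2' : v₂' ≠ v ∧ v₂' ≠ v₁)
    (dd1 : G.degree v₁' ≤ 4) (dd2 : G.degree v₂' ≤ 4)
    (hdeg3 : ∀ u ∈ ({v, v₁', v₂'} : Set V),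
      (G.neighborSet u \ {v₁, v₂}).ncard ≤ 3)
    (hpart : ∃ V1 V2 : Set V, IsF2FPartOn G ({v₁, v₂}ᶜ : Set V) V1 V2 ∧
      ∀ u ∈ ({v, v₁', v₂'} : Set V), u ∈ V2 ∨
        (u ∈ V1 ∧ ((G.neighborSet u ∩ V1) \ {v₁, v₂}).ncard ≤ 1)) :
    ∃ W1 W2 : Set V, IsF2FPartOn G Set.univ W1 W2 :=
  poor_triangle_partition_extension_general G v v₁ v₂ v₁' v₂' h1 h2 h3 d1 d2 h1' h2' hv1' hv2' hpart
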